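/- Let P be a tail-trivial random field on Ω = Υ^{ℤ^d}, v_1, v_2 ∈ ℤ^d linearly independent, and θ_k = ϑ_{v_1}^{k^{(1)}}∘ϑ_{v_2}^{k^{(2)}} for k ∈ ℤ^2, where ϑ_v is the shift by v. Suppose ‖κ_n(t)‖ → ∞ for μ-a.e. t. If τ is ergodic with respect to μ, then the skew product S(t,ω) = (τ(t), θ_{κ(t)}ω) is ergodic with respect to μ ⊗ P. -/

import Mathlib

open MeasureTheory Filter Finset

/-- The σ-algebra on `Υ^{ℤ^d}` generated by the coordinates in `J`. -/
def cylinderSigma {Υ : Type*} [MeasurableSpace Υ] {d : ℕ} (J : Set (Fin d → ℤ)) :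
    MeasurableSpace ((Fin d → ℤ) → Υ) :=
  ⨆ j ∈ J, MeasurableSpace.comap (fun ω => ω j) inferInstance

/-!
Let `A` be an invariant set of the skew product `S`. Approximate `A` by a set `U` that depends on
the field only through a finite window `W`. Since `S^[n] (t, ω) = (τ^[n] t, ϑ_{κ_n t} ω)`, the set
`S^[n] ⁻¹' U` only sees the sites `W + κ_n t`, which avoid a prescribed finite `V` as soon as
`κ_n t ∉ V - W`; as `κ_n → ∞` a.e., this happens outside a set of small measure. Hence `A` agrees
a.e. with a set measurable for `𝓑 ⊗ 𝓕_{Vᶜ}`, for every finite `V`, so almost every section of `A`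
is a.e. a tail event and has `P`-measure `0` or `1`. The section measure `t ↦ P(A_t)` is
`τ`-invariant, hence a.e. constant by ergodicity of `τ`, and `(μ ⊗ P)(A)` is `0` or `1`.
-/

open scoped symmDiff ENNReal Pointwise

section SetApproximation

variable {X : Type*}

theorem isSetAlgebra_iUnion_measurableSet {ι : Type*} [Nonempty ι] {m : ι → MeasurableSpace X}
    (hm : Directed (· ≤ ·) m) : IsSetAlgebra (⋃ i, {s | MeasurableSet[m i] s}) where
  empty_mem := Set.mem_iUnion.mpr ⟨Classical.arbitrary ι, @MeasurableSet.empty _ (m _)⟩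
  compl_mem := by
    simp only [Set.mem_iUnion, Set.mem_ofPred_eq]
    exact fun s ⟨i, hs⟩ => ⟨i, hs.compl⟩
  union_mem := by
    simp only [Set.mem_iUnion, Set.mem_ofPred_eq]
    rintro s t ⟨i, hs⟩ ⟨j, ht⟩
    obtain ⟨k, hik, hjk⟩ := hm i j
    exact ⟨k, (hik _ hs).union (hjk _ ht)⟩

variable {m : MeasurableSpace X} [MeasurableSpace X] {ρ : Measure X} {A : Set X}

theorem ae_eq_limsup_of_tsum_measure_symmDiff_ne_top {C : ℕ → Set X}
    (h : ∑' n, ρ (A ∆ C n) ≠ ∞) : A =ᵐ[ρ] (limsup C atTop : Set X) := by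
  refine measure_symmDiff_eq_zero_iff.mp (measure_mono_null (fun x hx => ?_)
    (measure_limsup_atTop_eq_zero h))
  rw [mem_limsup_iff_frequently_mem]
  rcases Set.mem_symmDiff.mp hx with ⟨hA, hC⟩ | ⟨hC, hA⟩
  all_goals rw [mem_limsup_iff_frequently_mem] at hC
  · exact (not_frequently.mp hC).frequently.mono fun n hn => Or.inl ⟨hA, hn⟩
  · exact hC.mono fun n hn => Or.inr ⟨hn, hA⟩

theorem exists_measurableSet_ae_eq_of_forall_measure_symmDiff_le
    (h : ∀ ε : ℝ, 0 < ε → ∃ B, MeasurableSet[m] B ∧ ρ (A ∆ B) ≤ ENNReal.ofReal ε) :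
    ∃ C, MeasurableSet[m] C ∧ A =ᵐ[ρ] C := by
  choose B hBm hB using fun n : ℕ => h ((2⁻¹ : ℝ) ^ n) (by positivity)
  refine ⟨limsup B atTop, @MeasurableSet.measurableSet_limsup _ m _ hBm,
    ae_eq_limsup_of_tsum_measure_symmDiff_ne_top
      (ne_top_of_le_ne_top ?_ (ENNReal.tsum_le_tsum hB))⟩
  rw [← ENNReal.ofReal_tsum_of_nonneg (fun n => by positivity)
    (summable_geometric_of_lt_one (by norm_num) (by norm_num))]
  exact ENNReal.ofReal_ne_top

theorem exists_measurableSet_iInf_ae_eq {ι : Type*} [Preorder ι] [Nonempty ι] [IsDirectedOrder ι]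
    [(atTop : Filter ι).IsCountablyGenerated] {m : ι → MeasurableSpace X} (hm : Antitone m)
    (h : ∀ i, ∃ C, MeasurableSet[m i] C ∧ A =ᵐ[ρ] C) :
    ∃ C, MeasurableSet[⨅ i, m i] C ∧ A =ᵐ[ρ] C := by
  obtain ⟨x, -, hx⟩ := exists_seq_monotone_tendsto_atTop_atTop ι
  choose C hCm hAC using fun n => h (x n)
  refine ⟨limsup C atTop, MeasurableSpace.measurableSet_iInf.mpr fun i => ?_,
    ae_eq_limsup_of_tsum_measure_symmDiff_ne_top
      (by simp [measure_symmDiff_eq_zero_iff.mpr (hAC _)])⟩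
  obtain ⟨N, hN⟩ := (tendsto_atTop.mp hx i).exists_forall_of_atTop
  rw [← limsup_nat_add C N]
  exact @MeasurableSet.measurableSet_limsup _ (m i) _
    fun n => hm (hN _ (Nat.le_add_left N n)) _ (hCm _)

theorem measureDense_iUnion_measurableSet [IsFiniteMeasure ρ] {ι : Type*} [Nonempty ι]
    {m : ι → MeasurableSpace X} (hm : Directed (· ≤ ·) m)
    (hgen : ⨆ i, m i = ‹MeasurableSpace X›) :
    ρ.MeasureDense (⋃ i, {s | MeasurableSet[m i] s}) :=
  .of_generateFrom_isSetAlgebra_finite ρ (isSetAlgebra_iUnion_measurableSet hm)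
    (hgen.symm.trans (MeasurableSpace.generateFrom_iUnion_measurableSet m).symm)

end SetApproximation

theorem tendsto_measure_preimage_finite_of_tendsto_cofinite {X G : Type*} [MeasurableSpace X]
    [MeasurableSpace G] [MeasurableSingletonClass G] {μ : Measure X} [IsFiniteMeasure μ]
    {f : ℕ → X → G} (hf : ∀ n, Measurable (f n))
    (h : ∀ᵐ x ∂μ, Tendsto (f · x) atTop cofinite) {K : Set G} (hK : K.Finite) :
    Tendsto (fun n => μ (f n ⁻¹' K)) atTop (nhds 0) := by
  simpa using tendsto_measure_of_ae_tendsto_indicator_of_isFiniteMeasure atTop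
    MeasurableSet.empty (fun n => hf n hK.measurableSet)
    (h.mono fun x hx => by simpa using hx.eventually hK.eventually_cofinite_notMem)

theorem measurable_birkhoffSum {X G : Type*} [MeasurableSpace X] [AddCommMonoid G]
    [MeasurableSpace G] [MeasurableAdd₂ G] {τ : X → X} {c : X → G} (hτ : Measurable τ)
    (hc : Measurable c) (n : ℕ) : Measurable (birkhoffSum τ c n) :=
  Finset.measurable_sum _ fun i _ => hc.comp (hτ.iterate i)

section SkewProduct

variable {M Ω G : Type*}

def skewProduct (τ : M → M) (θ : G → Ω → Ω) (c : M → G) (p : M × Ω) : M × Ω :=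
  (τ p.1, θ (c p.1) p.2)

theorem skewProduct_iterate [AddCommMonoid G] {τ : M → M} {θ : G → Ω → Ω} (c : M → G)
    (hθ_zero : ∀ ω, θ 0 ω = ω) (hθ_add : ∀ a b ω, θ (a + b) ω = θ b (θ a ω)) (n : ℕ)
    (p : M × Ω) :
    (skewProduct τ θ c)^[n] p = (τ^[n] p.1, θ (birkhoffSum τ c n p.1) p.2) := by
  induction n generalizing p with
  | zero => simp [hθ_zero]
  | succ n ih =>
    rw [Function.iterate_succ_apply, ih, birkhoffSum_succ', hθ_add]
    rfl

variable [MeasurableSpace M] [MeasurableSpace Ω] [MeasurableSpace G] [Countable G]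
  [MeasurableSingletonClass G] {μ : Measure M} {P : Measure Ω} {τ : M → M} {θ : G → Ω → Ω}
  {c : M → G}

theorem measurePreserving_skewProduct [SFinite μ] [SFinite P] (hτ : MeasurePreserving τ μ μ)
    (hc : Measurable c) (hθ : ∀ g, MeasurePreserving (θ g) P P) :
    MeasurePreserving (skewProduct τ θ c) (μ.prod P) (μ.prod P) :=
  hτ.skew_product (g := fun t => θ (c t))
    ((measurable_from_prod_countable_right (f := fun q : G × Ω => θ q.1 q.2)
      fun g => (hθ g).measurable).comp
      ((hc.comp measurable_fst).prodMk measurable_snd))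
    (ae_of_all _ fun t => (hθ (c t)).map_eq)

theorem ergodic_skewProduct_of_ae_measure_preimage_mk [IsProbabilityMeasure μ]
    [IsProbabilityMeasure P] (hτ : Ergodic τ μ) (hc : Measurable c)
    (hθ : ∀ g, MeasurePreserving (θ g) P P)
    (h01 : ∀ A, MeasurableSet A → skewProduct τ θ c ⁻¹' A = A →
      ∀ᵐ t ∂μ, P (Prod.mk t ⁻¹' A) = 0 ∨ P (Prod.mk t ⁻¹' A) = 1) :
    Ergodic (skewProduct τ θ c) (μ.prod P) := by
  refine ⟨measurePreserving_skewProduct hτ.toMeasurePreserving hc hθ, ⟨fun A hA hinv => ?_⟩⟩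
  set f : M → ℝ≥0∞ := fun t => P (Prod.mk t ⁻¹' A)
  have hf_inv : f ∘ τ = f := by
    funext t
    show P (Prod.mk (τ t) ⁻¹' A) = P (Prod.mk t ⁻¹' A)
    conv_rhs => rw [← hinv]
    exact ((hθ (c t)).measure_preimage (measurable_prodMk_left hA).nullMeasurableSet).symm
  obtain ⟨a, hfa⟩ := hτ.ae_eq_const_of_ae_eq_comp_ae
    (measurable_measure_prodMk_left hA).aestronglyMeasurable (.of_eq hf_inv)
  have hA_eq : (μ.prod P) A = a := by
    rw [Measure.prod_apply hA, lintegral_congr_ae hfa]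
    simp
  obtain ⟨t, ht, hta⟩ := ((h01 A hA hinv).and hfa).exists
  replace hta : P (Prod.mk t ⁻¹' A) = a := hta
  rw [eventuallyConst_set']
  rcases ht with h0 | h1
  · left
    rw [ae_eq_empty, hA_eq, ← hta, h0]
  · right
    rw [ae_eq_univ_iff_measure_eq hA.nullMeasurableSet, hA_eq, ← hta, h1, measure_univ]

end SkewProduct

section LatticeField

variable {Υ : Type*} {d : ℕ}

def latticeShift (c : Fin d → ℤ) (ω : (Fin d → ℤ) → Υ) : (Fin d → ℤ) → Υ :=
  fun j => ω (j + c)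

theorem latticeShift_zero (ω : (Fin d → ℤ) → Υ) : latticeShift 0 ω = ω :=
  funext fun j => congrArg ω (add_zero j)

theorem latticeShift_add (a b : Fin d → ℤ) (ω : (Fin d → ℤ) → Υ) :
    latticeShift (a + b) ω = latticeShift b (latticeShift a ω) :=
  funext fun j => congrArg ω (by abel)

variable [MeasurableSpace Υ]

def tailSigma : MeasurableSpace ((Fin d → ℤ) → Υ) :=
  ⨅ V : Finset (Fin d → ℤ), cylinderSigma ((↑V : Set (Fin d → ℤ))ᶜ)

theorem cylinderSigma_mono {J J' : Set (Fin d → ℤ)} (h : J ⊆ J') :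
    cylinderSigma (Υ := Υ) J ≤ cylinderSigma J' :=
  biSup_mono h

theorem iSup_cylinderSigma_finset :
    ⨆ W : Finset (Fin d → ℤ), cylinderSigma (Υ := Υ) (W : Set (Fin d → ℤ)) =
      MeasurableSpace.pi :=
  le_antisymm
    (iSup_le fun _ => iSup₂_le fun j _ => measurable_iff_comap_le.mp (measurable_pi_apply j))
    (iSup_le fun j => le_iSup_of_le {j} (le_iSup₂_of_le j (by simp) le_rfl))

theorem measurable_latticeShift_cylinderSigma {J J' : Set (Fin d → ℤ)} {c : Fin d → ℤ}
    (h : ∀ j ∈ J', j + c ∈ J) :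
    Measurable[cylinderSigma J, cylinderSigma J'] (latticeShift (Υ := Υ) c) := by
  refine measurable_iff_comap_le.mpr
    (MeasurableSpace.comap_le_iff_le_map.mpr (iSup₂_le fun j hj => ?_))
  rw [← MeasurableSpace.comap_le_iff_le_map, MeasurableSpace.comap_comp]
  exact le_iSup₂ (f := fun j _ => MeasurableSpace.comap (fun ω : (Fin d → ℤ) → Υ => ω j) _)
    (j + c) (h j hj)

end LatticeField

section LatticeSkewProduct

variable {Υ M : Type*} [MeasurableSpace Υ] [mM : MeasurableSpace M] {d : ℕ}
  {μ : Measure M} {P : Measure ((Fin d → ℤ) → Υ)} {τ : M → M} {c : M → Fin d → ℤ}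

theorem measure_eq_zero_or_one_of_forall_ae_eq_cylinderSigma_compl
    (htail : ∀ T, MeasurableSet[tailSigma] T → P T = 0 ∨ P T = 1) {B : Set ((Fin d → ℤ) → Υ)}
    (hB : ∀ V : Finset (Fin d → ℤ),
      ∃ C, MeasurableSet[cylinderSigma (↑V : Set (Fin d → ℤ))ᶜ] C ∧ B =ᵐ[P] C) :
    P B = 0 ∨ P B = 1 := by
  obtain ⟨C, hC, hBC⟩ := exists_measurableSet_iInf_ae_eq
    (fun V W hVW => cylinderSigma_mono (Set.compl_subset_compl.mpr (Finset.coe_subset.mpr hVW))) hB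
  rw [measure_congr hBC]
  exact htail C hC

theorem iSup_prod_cylinderSigma_finset :
    ⨆ W : Finset (Fin d → ℤ), mM.prod (cylinderSigma (Υ := Υ) (W : Set (Fin d → ℤ))) =
      (inferInstance : MeasurableSpace (M × ((Fin d → ℤ) → Υ))) := by
  simp_rw [MeasurableSpace.prod, ← sup_iSup, ← MeasurableSpace.comap_iSup,
    iSup_cylinderSigma_finset]
  rfl

theorem measurableSet_prod_cylinderSigma_compl_of_birkhoffSum_notMem (hτ : Measurable τ)
    (hc : Measurable c) {V W : Finset (Fin d → ℤ)} {U : Set (M × ((Fin d → ℤ) → Υ))}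
    (hU : MeasurableSet[mM.prod (cylinderSigma ↑W)] U) (n : ℕ) :
    MeasurableSet[mM.prod (cylinderSigma (↑V : Set (Fin d → ℤ))ᶜ)]
      {p | birkhoffSum τ c n p.1 ∉ V - W ∧ (skewProduct τ latticeShift c)^[n] p ∈ U} := by
  have hset : {p | birkhoffSum τ c n p.1 ∉ V - W ∧ (skewProduct τ latticeShift c)^[n] p ∈ U} =
      ⋃ k ∉ V - W, (fun p : M × ((Fin d → ℤ) → Υ) => birkhoffSum τ c n p.1) ⁻¹' {k} ∩
        (fun p => (τ^[n] p.1, latticeShift k p.2)) ⁻¹' U := by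
    ext p
    simp [skewProduct_iterate c latticeShift_zero latticeShift_add]
  rw [hset]
  refine MeasurableSet.iUnion fun k => MeasurableSet.iUnion fun hk => .inter ?_ ?_
  · exact (measurable_birkhoffSum hτ hc n).comp measurable_fst (measurableSet_singleton k)
  · refine Measurable.prodMk ((hτ.iterate n).comp measurable_fst)
      ((measurable_latticeShift_cylinderSigma fun j hj => Set.mem_compl fun hjk => hk ?_).comp
        measurable_snd) hU
    simpa using Finset.sub_mem_sub hjk hj

theorem exists_ae_eq_prod_cylinderSigma_compl_of_preimage_eq [IsFiniteMeasure μ]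
    [IsProbabilityMeasure P] (hτ : MeasurePreserving τ μ μ) (hc : Measurable c)
    (hP : ∀ v, MeasurePreserving (latticeShift v) P P)
    (hc_inf : ∀ᵐ t ∂μ, Tendsto (birkhoffSum τ c · t) atTop cofinite)
    {A : Set (M × ((Fin d → ℤ) → Υ))} (hA : MeasurableSet A)
    (hinv : skewProduct τ latticeShift c ⁻¹' A = A) (V : Finset (Fin d → ℤ)) :
    ∃ C, MeasurableSet[mM.prod (cylinderSigma (↑V : Set (Fin d → ℤ))ᶜ)] C ∧
      A =ᵐ[μ.prod P] C := by
  set S := skewProduct τ latticeShift c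
  refine exists_measurableSet_ae_eq_of_forall_measure_symmDiff_le fun ε hε => ?_
  have hdense := measureDense_iUnion_measurableSet (ρ := μ.prod P)
    (Monotone.directed_le fun W W' h => sup_le_sup_left (MeasurableSpace.comap_mono
      (cylinderSigma_mono (Finset.coe_subset.mpr h))) _) iSup_prod_cylinderSigma_finset
  obtain ⟨U, hU_mem, hAU⟩ := hdense.approx A hA (measure_ne_top _ _) (ε / 2) (by positivity)
  obtain ⟨W, hU⟩ := Set.mem_iUnion.mp hU_mem
  obtain ⟨n, hn⟩ := ((tendsto_measure_preimage_finite_of_tendsto_cofinite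
    (measurable_birkhoffSum hτ.measurable hc) hc_inf (V - W).finite_toSet).eventually_lt_const
    (ENNReal.ofReal_pos.mpr (half_pos hε))).exists
  have hsub : A ∆ {p | birkhoffSum τ c n p.1 ∉ V - W ∧ S^[n] p ∈ U} ⊆
      S^[n] ⁻¹' (A ∆ U) ∪ (birkhoffSum τ c n ⁻¹' ↑(V - W)) ×ˢ Set.univ := by
    intro p hp
    have hAn : p ∈ S^[n] ⁻¹' A ↔ p ∈ A := by rw [Function.IsFixedPt.preimage_iterate hinv n]
    simp only [Set.mem_symmDiff, Set.mem_preimage, Set.mem_union, Set.mem_prod,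
      Set.mem_ofPred_eq, Finset.mem_coe, Set.mem_univ, and_true] at hp hAn ⊢
    tauto
  refine ⟨_, measurableSet_prod_cylinderSigma_compl_of_birkhoffSum_notMem hτ.measurable hc hU n,
    (measure_mono hsub).trans ((measure_union_le _ _).trans ?_)⟩
  rw [((measurePreserving_skewProduct hτ hc hP).iterate n).measure_preimage
    (hA.symmDiff (hdense.measurable U hU_mem)).nullMeasurableSet, Measure.prod_prod,
    measure_univ, mul_one, ← add_halves ε, ENNReal.ofReal_add (half_pos hε).le (half_pos hε).le]
  exact add_le_add hAU.le hn.le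

theorem ae_measure_preimage_mk_eq_zero_or_one [SFinite P]
    (htail : ∀ T, MeasurableSet[tailSigma] T → P T = 0 ∨ P T = 1)
    {A : Set (M × ((Fin d → ℤ) → Υ))}
    (hA : ∀ V : Finset (Fin d → ℤ),
      ∃ C, MeasurableSet[mM.prod (cylinderSigma (↑V : Set (Fin d → ℤ))ᶜ)] C ∧ A =ᵐ[μ.prod P] C) :
    ∀ᵐ t ∂μ, P (Prod.mk t ⁻¹' A) = 0 ∨ P (Prod.mk t ⁻¹' A) = 1 := by
  choose C hC hAC using hA
  filter_upwards [ae_all_iff.mpr fun V => Measure.ae_ae_of_ae_prod (hAC V)] with t ht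
  exact measure_eq_zero_or_one_of_forall_ae_eq_cylinderSigma_compl htail
    fun V => ⟨Prod.mk t ⁻¹' C V, measurable_prodMk_left (hC V), ht V⟩

theorem ergodic_skewProduct_latticeShift [IsProbabilityMeasure μ] [IsProbabilityMeasure P]
    (hP : ∀ v, MeasurePreserving (latticeShift v) P P)
    (htail : ∀ T, MeasurableSet[tailSigma] T → P T = 0 ∨ P T = 1) (hτ : Ergodic τ μ)
    (hc : Measurable c) (hc_inf : ∀ᵐ t ∂μ, Tendsto (birkhoffSum τ c · t) atTop cofinite) :
    Ergodic (skewProduct τ latticeShift c) (μ.prod P) :=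
  ergodic_skewProduct_of_ae_measure_preimage_mk hτ hc hP fun _ hA hinv =>
    ae_measure_preimage_mk_eq_zero_or_one htail
      (exists_ae_eq_prod_cylinderSigma_compl_of_preimage_eq hτ.toMeasurePreserving hc hP hc_inf
        hA hinv)

end LatticeSkewProduct

theorem skew_product_shift_ergodic_general
    {Υ M : Type*} [MeasurableSpace Υ] [MeasurableSpace M] {d : ℕ}
    (μ : Measure M) (P : Measure ((Fin d → ℤ) → Υ))
    [IsProbabilityMeasure μ] [IsProbabilityMeasure P]
    -- stationarity: P is invariant under all shifts
    (hinv : ∀ v : Fin d → ℤ,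
      MeasurePreserving (fun ω (j : Fin d → ℤ) => ω (j + v)) P P)
    -- tail triviality
    (htail : ∀ T : Set ((Fin d → ℤ) → Υ),
      MeasurableSet[⨅ V : Finset (Fin d → ℤ), cylinderSigma ((↑V : Set (Fin d → ℤ))ᶜ)] T →
      P T = 0 ∨ P T = 1)
    (v₁ v₂ : Fin d → ℤ)
    -- linear independence of v₁ and v₂
    (hindep : ∀ a b : ℤ, a • v₁ + b • v₂ = 0 → a = 0 ∧ b = 0)
    (τ : M → M)
    (κ : M → ℤ × ℤ) (hκ : Measurable κ)
    -- `‖κ_n(t)‖ → ∞` for μ-a.e. t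
    (hκinf : ∀ᵐ t ∂μ,
      Tendsto (fun n : ℕ => ∑ i ∈ Finset.range n, κ (τ^[i] t)) atTop cofinite)
    (hergτ : Ergodic τ μ) :
    Ergodic (fun p : M × ((Fin d → ℤ) → Υ) =>
        (τ p.1, fun j => p.2 (j + (κ p.1).1 • v₁ + (κ p.1).2 • v₂))) (μ.prod P) := by
  set φ : ℤ × ℤ →+ (Fin d → ℤ) := (zmultiplesHom _ v₁).coprod (zmultiplesHom _ v₂)
  have hφ : Function.Injective φ := (injective_iff_map_eq_zero φ).mpr fun k hk =>
    Prod.ext_iff.mpr (hindep k.1 k.2 hk)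
  have hS : (fun p : M × ((Fin d → ℤ) → Υ) =>
      (τ p.1, fun j => p.2 (j + (κ p.1).1 • v₁ + (κ p.1).2 • v₂))) =
      skewProduct τ latticeShift (φ ∘ κ) :=
    funext fun p => Prod.ext rfl (funext fun j => congrArg p.2 (add_assoc _ _ _))
  rw [hS]
  refine ergodic_skewProduct_latticeShift hinv htail hergτ ((measurable_of_countable φ).comp hκ) ?_
  filter_upwards [hκinf] with t ht
  simp_rw [← map_birkhoffSum]
  exact hφ.tendsto_cofinite.comp ht

/-- for a tail-trivial random field `P`, two linearly independent shift
directions `v₁, v₂`, the two-parameter shift group `θ_k = ϑ_{v₁}^{k₁} ∘ ϑ_{v₂}^{k₂}`, and a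
cocycle with `‖κ_n(t)‖ → ∞` μ-a.e., ergodicity of `τ` implies ergodicity of the skew
product w.r.t. `μ ⊗ P`. -/
theorem skew_product_shift_ergodic
    {Υ M : Type*} [MeasurableSpace Υ] [MeasurableSpace M] {d : ℕ}
    (μ : Measure M) (P : Measure ((Fin d → ℤ) → Υ))
    [IsProbabilityMeasure μ] [IsProbabilityMeasure P]
    -- stationarity: P is invariant under all shifts
    (hinv : ∀ v : Fin d → ℤ,
      MeasurePreserving (fun ω (j : Fin d → ℤ) => ω (j + v)) P P)
    -- tail triviality
    (htail : ∀ T : Set ((Fin d → ℤ) → Υ),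
      MeasurableSet[⨅ V : Finset (Fin d → ℤ), cylinderSigma ((↑V : Set (Fin d → ℤ))ᶜ)] T →
      P T = 0 ∨ P T = 1)
    (v₁ v₂ : Fin d → ℤ)
    -- linear independence of v₁ and v₂
    (hindep : ∀ a b : ℤ, a • v₁ + b • v₂ = 0 → a = 0 ∧ b = 0)
    (τ : M → M) (hτ : MeasurePreserving τ μ μ)
    (κ : M → ℤ × ℤ) (hκ : Measurable κ)
    -- `‖κ_n(t)‖ → ∞` for μ-a.e. t
    (hκinf : ∀ᵐ t ∂μ,
      Tendsto (fun n : ℕ => ∑ i ∈ Finset.range n, κ (τ^[i] t)) atTop cofinite)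
    (hergτ : Ergodic τ μ) :
    Ergodic (fun p : M × ((Fin d → ℤ) → Υ) =>
        (τ p.1, fun j => p.2 (j + (κ p.1).1 • v₁ + (κ p.1).2 • v₂))) (μ.prod P) :=
  skew_product_shift_ergodic_general μ P hinv htail v₁ v₂ hindep τ κ hκ hκinf hergτ
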